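/- arXiv:2310.07616 — 2 statements merged into one kernel-verified Lean document; each statement's English description precedes it below -/
import Mathlib

section
/- Let D be an N×N diagonal matrix with positive diagonal entries and A a diagonally symmetrizable real N×N matrix. Then the map τ ↦ r(D e^{τA}) is convex on [0, ∞), where r denotes the spectral radius. -/
open Matrix

/-- Diagonally symmetrizable: `T⁻¹ * A * T` symmetric for some invertible diagonal `T`. -/
def IsDiagSymmetrizable {N : ℕ} (A : Matrix (Fin N) (Fin N) ℝ) : Prop :=
  ∃ d : Fin N → ℝ, (∀ i, d i ≠ 0) ∧
    ((Matrix.diagonal d)⁻¹ * A * Matrix.diagonal d).IsSymm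

/-- The spectral radius of a real matrix: the largest modulus of its (complex) eigenvalues. -/
noncomputable def specRad {N : ℕ} (M : Matrix (Fin N) (Fin N) ℝ) : ℝ :=
  sSup ((fun z : ℂ => ‖z‖) '' spectrum ℂ (M.map (algebraMap ℝ ℂ)))

/-- The matrix exponential. -/
noncomputable def mexp {N : ℕ} (M : Matrix (Fin N) (Fin N) ℝ) : Matrix (Fin N) (Fin N) ℝ :=
  NormedSpace.exp M

lemma specRad_conj {N : ℕ} (M : Matrix (Fin N) (Fin N) ℝ) {P : Matrix (Fin N) (Fin N) ℝ}
    (hP : IsUnit P) : specRad (P * M * P⁻¹) = specRad M := by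
  obtain ⟨u, rfl⟩ := hP
  unfold specRad
  set w : (Matrix (Fin N) (Fin N) ℂ)ˣ := Units.map (algebraMap ℝ ℂ).mapMatrix.toMonoidHom u with hw
  have hmap : (((u : Matrix (Fin N) (Fin N) ℝ) * M * (↑u : Matrix (Fin N) (Fin N) ℝ)⁻¹).map (algebraMap ℝ ℂ))
      = (w : Matrix (Fin N) (Fin N) ℂ) * M.map (algebraMap ℝ ℂ) * ((w⁻¹ : (Matrix (Fin N) (Fin N) ℂ)ˣ) : Matrix (Fin N) (Fin N) ℂ) := by
    rw [← Matrix.coe_units_inv]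
    simp only [hw, ← Units.coe_map_inv]
    simp only [Units.coe_map, RingHom.mapMatrix_apply, MonoidHom.coe_coe]
    simp only [Matrix.map_mul]
    simp [Units.coe_map_inv, RingHom.mapMatrix_apply]
  rw [hmap, spectrum.units_conjugate]

lemma specRad_diagonal {N : ℕ} (v : Fin N → ℝ) :
    specRad (diagonal v) = sSup (Set.range fun i => |v i|) := by
  unfold specRad
  rw [Matrix.diagonal_map (map_zero _), spectrum_diagonal, ← Set.range_comp]
  congr 1
  ext i
  simp [Complex.norm_real]

lemma specRad_isHermitian {N : ℕ} {M : Matrix (Fin N) (Fin N) ℝ} (hM : M.IsHermitian) :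
    specRad M = sSup (Set.range fun i => |hM.eigenvalues i|) := by
  set V : Matrix (Fin N) (Fin N) ℝ := ↑(hM.eigenvectorUnitary) with hVdef
  have hV : V * star V = 1 := mem_unitaryGroup_iff.mp hM.eigenvectorUnitary.2
  have hV' : star V * V = 1 := mem_unitaryGroup_iff'.mp hM.eigenvectorUnitary.2
  have hunit : IsUnit V := ⟨⟨V, star V, hV, hV'⟩, rfl⟩
  have hinv : V⁻¹ = star V := Matrix.inv_eq_right_inv hV
  have : M = V * diagonal hM.eigenvalues * V⁻¹ := by
    rw [hinv]
    simpa [RCLike.ofReal_real_eq_id] using hM.spectral_theorem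
  conv_lhs => rw [this]
  rw [specRad_conj _ hunit, specRad_diagonal]

lemma quad_form_eq {N : ℕ} (P : Matrix (Fin N) (Fin N) ℝ) (d : Fin N → ℝ) (v : Fin N → ℝ) :
    v ⬝ᵥ ((P * diagonal d * Pᵀ) *ᵥ v) = ∑ k, d k * ((Pᵀ *ᵥ v) k)^2 := by
  rw [← Matrix.mulVec_mulVec, ← Matrix.mulVec_mulVec, Matrix.dotProduct_mulVec,
    ← Matrix.mulVec_transpose]
  simp [dotProduct, Matrix.mulVec_diagonal]
  congr 1; ext k; ring

lemma euclid_dot_one {N : ℕ} (x : EuclideanSpace ℝ (Fin N)) (hx : ‖x‖ = 1) :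
    (⇑x : Fin N → ℝ) ⬝ᵥ ⇑x = 1 := by
  have h2 : (inner ℝ x x : ℝ) = 1 := by
    rw [real_inner_self_eq_norm_sq, hx]; norm_num
  simp only [PiLp.inner_apply, RCLike.inner_apply, conj_trivial] at h2
  simpa only [dotProduct] using h2

lemma star_coe_eigen {N : ℕ} {M : Matrix (Fin N) (Fin N) ℝ} (hM : M.IsHermitian) :
    star ((hM.eigenvectorUnitary : Matrix (Fin N) (Fin N) ℝ)) =
      (hM.eigenvectorUnitary : Matrix (Fin N) (Fin N) ℝ)ᵀ := by
  rw [Matrix.star_eq_conjTranspose, Matrix.conjTranspose_eq_transpose_of_trivial]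

lemma rayleigh_le {N : ℕ} {M : Matrix (Fin N) (Fin N) ℝ} (hM : M.IsHermitian) {c : ℝ}
    (hc : ∀ i, hM.eigenvalues i ≤ c) (v : Fin N → ℝ) :
    v ⬝ᵥ (M *ᵥ v) ≤ c * (v ⬝ᵥ v) := by
  set V : Matrix (Fin N) (Fin N) ℝ := ↑(hM.eigenvectorUnitary) with hVdef
  have hV : V * Vᵀ = 1 := by
    rw [← star_coe_eigen hM]; exact mem_unitaryGroup_iff.mp hM.eigenvectorUnitary.2
  have hMdec : M = V * diagonal hM.eigenvalues * Vᵀ := by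
    rw [← star_coe_eigen hM]
    simpa [RCLike.ofReal_real_eq_id] using hM.spectral_theorem
  set w : Fin N → ℝ := Vᵀ *ᵥ v with hwdef
  have hww : w ⬝ᵥ w = v ⬝ᵥ v := by
    have h1 : w ⬝ᵥ w = (V *ᵥ w) ⬝ᵥ v := by
      rw [hwdef]
      rw [show w ⬝ᵥ (Vᵀ *ᵥ v) = (w ᵥ* Vᵀ) ⬝ᵥ v from Matrix.dotProduct_mulVec _ _ _,
        Matrix.vecMul_transpose]
    rw [h1, hwdef, Matrix.mulVec_mulVec, hV, Matrix.one_mulVec]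
  conv_lhs => rw [hMdec]
  rw [quad_form_eq]
  have : ∑ k, hM.eigenvalues k * ((Vᵀ *ᵥ v) k)^2 ≤ ∑ k, c * (w k)^2 := by
    apply Finset.sum_le_sum
    intro k _
    exact mul_le_mul_of_nonneg_right (hc k) (sq_nonneg _)
  refine this.trans (le_of_eq ?_)
  rw [← hww, dotProduct, Finset.mul_sum]
  exact Finset.sum_congr rfl fun k _ => by ring

lemma rayleigh_attained {N : ℕ} {M : Matrix (Fin N) (Fin N) ℝ} (hM : M.IsHermitian) (i : Fin N) :
    ∃ v : Fin N → ℝ, v ⬝ᵥ v = 1 ∧ v ⬝ᵥ (M *ᵥ v) = hM.eigenvalues i := by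
  have hone := euclid_dot_one _ (hM.eigenvectorBasis.orthonormal.1 i)
  refine ⟨⇑(hM.eigenvectorBasis i), hone, ?_⟩
  rw [hM.mulVec_eigenvectorBasis, dotProduct_smul, hone, smul_eq_mul, mul_one]

theorem stmt_7 {N : ℕ} (Ddiag : Fin N → ℝ) (hD : ∀ i, 0 < Ddiag i)
    (A : Matrix (Fin N) (Fin N) ℝ) (hA : IsDiagSymmetrizable A) :
    ConvexOn ℝ (Set.Ici (0 : ℝ))
      (fun τ : ℝ => specRad (Matrix.diagonal Ddiag * mexp (τ • A))) := by
  classical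
  rcases Nat.eq_zero_or_pos N with hN | hN
  · subst hN
    have hsp : ∀ M : Matrix (Fin 0) (Fin 0) ℝ, specRad M = 0 := by
      intro M
      have h : spectrum ℂ (M.map (algebraMap ℝ ℂ)) = ∅ :=
        Set.eq_empty_of_forall_notMem fun z hz =>
          (spectrum.mem_iff.mp hz) (isUnit_of_subsingleton _)
      simp [specRad, h, Real.sSup_empty]
    simp only [hsp]
    exact convexOn_const 0 (convex_Ici 0)
  have : Nonempty (Fin N) := Fin.pos_iff_nonempty.mp hN
  obtain ⟨dd, hdd, hSsym⟩ := hA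
  set T : Matrix (Fin N) (Fin N) ℝ := diagonal dd with hT
  have hTdet : IsUnit T.det := by
    rw [hT, det_diagonal, isUnit_iff_ne_zero]
    exact Finset.prod_ne_zero_iff.mpr fun i _ => hdd i
  have hTunit : IsUnit T := (Matrix.isUnit_iff_isUnit_det _).mpr hTdet
  set S : Matrix (Fin N) (Fin N) ℝ := T⁻¹ * A * T with hSdef
  have hSsymm : S.IsSymm := hSsym
  have hTT : T * T⁻¹ = 1 := Matrix.mul_nonsing_inv _ hTdet
  have hA_eq : A = T * S * T⁻¹ := by
    rw [hSdef]
    simp only [Matrix.mul_assoc]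
    rw [show T⁻¹ * (A * (T * T⁻¹)) = T⁻¹ * A from by rw [hTT, Matrix.mul_one],
      ← Matrix.mul_assoc, hTT, Matrix.one_mul]
  have hexpA : ∀ τ : ℝ, mexp (τ • A) = T * mexp (τ • S) * T⁻¹ := by
    intro τ
    have h1 : τ • A = T * (τ • S) * T⁻¹ := by
      rw [hA_eq, ← smul_mul_assoc, ← mul_smul_comm]
    rw [h1]
    exact Matrix.exp_conj T (τ • S) hTunit
  -- square root of D
  set E : Matrix (Fin N) (Fin N) ℝ := diagonal (fun i => Real.sqrt (Ddiag i)) with hE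
  have hEE : E * E = diagonal Ddiag := by
    rw [hE, diagonal_mul_diagonal]
    exact congrArg diagonal (funext fun i => Real.mul_self_sqrt (hD i).le)
  have hEdet : IsUnit E.det := by
    rw [hE, det_diagonal, isUnit_iff_ne_zero]
    exact Finset.prod_ne_zero_iff.mpr fun i _ =>
      ne_of_gt (Real.sqrt_pos.mpr (hD i))
  have hEunit : IsUnit E := (Matrix.isUnit_iff_isUnit_det _).mpr hEdet
  have hEEinv : E * E⁻¹ = 1 := Matrix.mul_nonsing_inv _ hEdet
  set B : ℝ → Matrix (Fin N) (Fin N) ℝ := fun τ => E * mexp (τ • S) * E with hB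
  have hexpSymm : ∀ τ : ℝ, (mexp (τ • S)).IsSymm := by
    intro τ
    have h1 : (τ • S)ᵀ = τ • S := by rw [Matrix.transpose_smul, hSsymm.eq]
    rw [Matrix.IsSymm, mexp, ← Matrix.exp_transpose, h1]
  have hBsym : ∀ τ : ℝ, (B τ).IsSymm := by
    intro τ
    rw [Matrix.IsSymm, hB]
    simp only [Matrix.transpose_mul, Matrix.transpose_smul, hE, Matrix.diagonal_transpose]
    rw [← hE, (hexpSymm τ).eq, Matrix.mul_assoc]
  have hBh : ∀ τ : ℝ, (B τ).IsHermitian := by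
    intro τ
    rw [Matrix.IsHermitian, Matrix.conjTranspose_eq_transpose_of_trivial]
    exact hBsym τ
  have hBpos : ∀ τ : ℝ, (B τ).PosSemidef := by
    intro τ
    have hhalf : mexp ((τ/2) • S) * mexp ((τ/2) • S) = mexp (τ • S) := by
      rw [mexp, mexp, ← Matrix.exp_add_of_commute _ _ (Commute.refl _), ← add_smul]
      norm_num
    have hCT : (mexp ((τ/2) • S) * E)ᵀ = E * mexp ((τ/2) • S) := by
      rw [Matrix.transpose_mul, (hexpSymm _).eq, hE, Matrix.diagonal_transpose, ← hE]
    have hBeq : B τ = (mexp ((τ/2) • S) * E)ᵀ * (mexp ((τ/2) • S) * E) := by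
      rw [hCT, hB]
      simp only [Matrix.mul_assoc]
      rw [← hhalf]
      simp only [Matrix.mul_assoc]
    rw [hBeq]
    have h := Matrix.posSemidef_conjTranspose_mul_self (mexp ((τ/2) • S) * E)
    rwa [Matrix.conjTranspose_eq_transpose_of_trivial] at h
  -- spectral decomposition of S
  have hSh : S.IsHermitian := by
    rw [Matrix.IsHermitian, Matrix.conjTranspose_eq_transpose_of_trivial]
    exact hSsymm
  set μ : Fin N → ℝ := hSh.eigenvalues with hμ
  set U : Matrix (Fin N) (Fin N) ℝ := ↑(hSh.eigenvectorUnitary) with hU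
  have hUU : U * Uᵀ = 1 := by
    rw [hU, ← star_coe_eigen hSh]
    exact mem_unitaryGroup_iff.mp hSh.eigenvectorUnitary.2
  have hUU' : Uᵀ * U = 1 := by
    rw [hU, ← star_coe_eigen hSh]
    exact mem_unitaryGroup_iff'.mp hSh.eigenvectorUnitary.2
  have hUunit : IsUnit U := ⟨⟨U, Uᵀ, hUU, hUU'⟩, rfl⟩
  have hUinv : U⁻¹ = Uᵀ := Matrix.inv_eq_right_inv hUU
  have hSdec : S = U * diagonal μ * Uᵀ := by
    rw [hU, hμ, ← star_coe_eigen hSh]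
    simpa [RCLike.ofReal_real_eq_id] using hSh.spectral_theorem
  set P : Matrix (Fin N) (Fin N) ℝ := E * U with hP
  have hBdec : ∀ τ : ℝ, B τ = P * diagonal (fun k => Real.exp (τ * μ k)) * Pᵀ := by
    intro τ
    have h1 : τ • S = U * diagonal (fun k => τ * μ k) * U⁻¹ := by
      rw [hUinv]
      symm
      have hd : (diagonal (fun k => τ * μ k) : Matrix (Fin N) (Fin N) ℝ)
          = τ • diagonal μ := by
        rw [← Matrix.diagonal_smul]
        rfl
      rw [hd, mul_smul_comm, smul_mul_assoc, ← hSdec]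
    have h2 : mexp (τ • S) = U * diagonal (fun k => Real.exp (τ * μ k)) * Uᵀ := by
      rw [h1, mexp, Matrix.exp_conj U _ hUunit, Matrix.exp_diagonal, hUinv]
      congr 2
      rw [Pi.exp_def, ← Real.exp_eq_exp_ℝ]
    show E * mexp (τ • S) * E = _
    rw [h2, hP, Matrix.transpose_mul, hE, Matrix.diagonal_transpose, ← hE]
    simp only [Matrix.mul_assoc]
  -- the max-eigenvalue function
  set lam : ℝ → ℝ := fun τ => sSup (Set.range (hBh τ).eigenvalues) with hlam
  have hspec : ∀ τ : ℝ, specRad (diagonal Ddiag * mexp (τ • A)) = lam τ := by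
    intro τ
    have hEBE : E * B τ * E⁻¹ = diagonal Ddiag * mexp (τ • S) := by
      rw [hB]
      simp only [Matrix.mul_assoc]
      rw [hEEinv, Matrix.mul_one, ← Matrix.mul_assoc, hEE]
    have hconj1 : diagonal Ddiag * mexp (τ • A) = T * (E * B τ * E⁻¹) * T⁻¹ := by
      rw [hEBE, hexpA τ]
      have hcomm : diagonal Ddiag * T = T * diagonal Ddiag := by
        rw [hT, diagonal_mul_diagonal, diagonal_mul_diagonal]
        exact congrArg diagonal (funext fun i => mul_comm _ _)
      simp only [← Matrix.mul_assoc]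
      rw [hcomm]
    rw [hconj1, specRad_conj _ hTunit, specRad_conj _ hEunit,
      specRad_isHermitian (hBh τ), hlam]
    have habs : (fun i => |(hBh τ).eigenvalues i|) = (hBh τ).eigenvalues :=
      funext fun i => abs_of_nonneg ((hBpos τ).eigenvalues_nonneg i)
    rw [habs]
  simp only [hspec]
  refine ⟨convex_Ici 0, fun τ₁ _ τ₂ _ a b ha hb hab => ?_⟩
  simp only [smul_eq_mul]
  have hub : ∀ τ (v : Fin N → ℝ), v ⬝ᵥ (B τ *ᵥ v) ≤ lam τ * (v ⬝ᵥ v) := by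
    intro τ v
    exact rayleigh_le (hBh τ) (fun i => le_csSup (Set.finite_range _).bddAbove ⟨i, rfl⟩) v
  obtain ⟨i₀, hi₀⟩ := (Set.range_nonempty (hBh (a*τ₁+b*τ₂)).eigenvalues).csSup_mem
      (Set.finite_range _)
  obtain ⟨v, hv1, hv2⟩ := rayleigh_attained (hBh (a*τ₁+b*τ₂)) i₀
  have hgoal : lam (a*τ₁+b*τ₂) = v ⬝ᵥ (B (a*τ₁+b*τ₂) *ᵥ v) := by rw [hv2, hi₀]
  rw [hgoal]
  have hq : ∀ τ, v ⬝ᵥ (B τ *ᵥ v) = ∑ k, ((Pᵀ *ᵥ v) k)^2 * Real.exp (τ * μ k) := by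
    intro τ
    rw [hBdec τ, quad_form_eq]
    exact Finset.sum_congr rfl fun k _ => mul_comm _ _
  rw [hq]
  have step1 : ∑ k, ((Pᵀ *ᵥ v) k)^2 * Real.exp ((a*τ₁+b*τ₂) * μ k)
      ≤ ∑ k, ((Pᵀ *ᵥ v) k)^2 * (a * Real.exp (τ₁ * μ k) + b * Real.exp (τ₂ * μ k)) := by
    apply Finset.sum_le_sum
    intro k _
    apply mul_le_mul_of_nonneg_left _ (sq_nonneg _)
    have h := convexOn_exp.2 (Set.mem_univ (τ₁ * μ k)) (Set.mem_univ (τ₂ * μ k)) ha hb hab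
    simp only [smul_eq_mul] at h
    calc Real.exp ((a*τ₁+b*τ₂) * μ k) = Real.exp (a * (τ₁ * μ k) + b * (τ₂ * μ k)) := by
          ring_nf
      _ ≤ a * Real.exp (τ₁ * μ k) + b * Real.exp (τ₂ * μ k) := h
  refine step1.trans ?_
  have step2 : ∑ k, ((Pᵀ *ᵥ v) k)^2 * (a * Real.exp (τ₁ * μ k) + b * Real.exp (τ₂ * μ k))
      = a * (v ⬝ᵥ (B τ₁ *ᵥ v)) + b * (v ⬝ᵥ (B τ₂ *ᵥ v)) := by
    rw [hq, hq, Finset.mul_sum, Finset.mul_sum, ← Finset.sum_add_distrib]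
    exact Finset.sum_congr rfl fun k _ => by ring
  rw [step2]
  have h1 : v ⬝ᵥ (B τ₁ *ᵥ v) ≤ lam τ₁ := by
    have := hub τ₁ v; rwa [hv1, mul_one] at this
  have h2 : v ⬝ᵥ (B τ₂ *ᵥ v) ≤ lam τ₂ := by
    have := hub τ₂ v; rwa [hv1, mul_one] at this
  exact add_le_add (mul_le_mul_of_nonneg_left h1 ha) (mul_le_mul_of_nonneg_left h2 hb)
end

section
/- Assume D is diagonal with D_{ii} ∈ (0,1] and a unique index k with D_{kk} > D_{ii} for i ≠ k, and A is diagonally symmetrizable with largest eigenvalue λ₁ < 0. Then τ ↦ r(D e^{τA}) is strictly decreasing on [0, ∞) and tends to 0 as τ → ∞. -/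
open Matrix

open scoped Matrix.Norms.L2Operator

noncomputable instance matCStarAlgebra (n : Type*) [Fintype n] [DecidableEq n] :
    CStarAlgebra (Matrix n n ℂ) :=
  { (inferInstance : NormedRing (Matrix n n ℂ)),
    (inferInstance : StarRing (Matrix n n ℂ)),
    (inferInstance : CompleteSpace (Matrix n n ℂ)),
    (inferInstance : CStarRing (Matrix n n ℂ)),
    (inferInstance : NormedAlgebra ℂ (Matrix n n ℂ)),
    (inferInstance : StarModule ℂ (Matrix n n ℂ)) with }

lemma sSup_abs_spectrum {n : Type*} [Fintype n] [DecidableEq n] [Nonempty n]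
    (M : Matrix n n ℂ) (hM : IsSelfAdjoint M) :
    sSup ((fun z : ℂ => ‖z‖) '' spectrum ℂ M) = ‖M‖ := by
  have hne : (spectrum ℂ M).Nonempty := spectrum.nonempty M
  have hcpt : IsCompact (spectrum ℂ M) := spectrum.isCompact M
  obtain ⟨x0, hx0, hmax⟩ := hcpt.exists_isMaxOn hne continuous_norm.continuousOn
  have hbdd : BddAbove ((fun z : ℂ => ‖z‖) '' spectrum ℂ M) :=
    (hcpt.image continuous_norm).bddAbove
  have hsup : sSup ((fun z : ℂ => ‖z‖) '' spectrum ℂ M) = ‖x0‖ := by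
    refine le_antisymm (csSup_le (hne.image _) ?_) (le_csSup hbdd ⟨x0, hx0, rfl⟩)
    rintro _ ⟨k, hk, rfl⟩; exact hmax hk
  have hrad : spectralRadius ℂ M = (‖x0‖₊ : ENNReal) := by
    refine le_antisymm (iSup₂_le fun k hk => ?_) ?_
    · exact ENNReal.coe_le_coe.2 (NNReal.coe_le_coe.1 (hmax hk))
    · exact le_iSup₂ (f := fun k (_ : k ∈ spectrum ℂ M) => ((‖k‖₊ : ENNReal))) x0 hx0
  have h2 := hM.spectralRadius_eq_nnnorm
  rw [hrad] at h2
  have h3 : ‖x0‖ = ‖M‖ := congrArg NNReal.toReal (ENNReal.coe_inj.mp h2)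
  rw [hsup, h3]

lemma map_conjTranspose_real {n : Type*} [Fintype n] (R : Matrix n n ℝ) :
    (R.map (algebraMap ℝ ℂ))ᴴ = Rᵀ.map (algebraMap ℝ ℂ) := by
  ext i j
  simp [Matrix.conjTranspose_apply, Matrix.map_apply, Complex.conj_ofReal]

lemma isSelfAdjoint_map_of_isSymm {n : Type*} [Fintype n] {R : Matrix n n ℝ}
    (h : R.IsSymm) : IsSelfAdjoint (R.map (algebraMap ℝ ℂ)) := by
  show (R.map (algebraMap ℝ ℂ))ᴴ = R.map (algebraMap ℝ ℂ)
  rw [map_conjTranspose_real, h]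

lemma isUnit_diagonal {n : Type*} [Fintype n] [DecidableEq n]
    {v : n → ℝ} (hv : ∀ i, v i ≠ 0) : IsUnit (Matrix.diagonal v) := by
  rw [Matrix.isUnit_iff_isUnit_det, Matrix.det_diagonal]
  exact (Finset.prod_ne_zero_iff.2 fun i _ => hv i).isUnit

set_option maxHeartbeats 2000000 in
theorem stmt_16 {N : ℕ} (Ddiag : Fin N → ℝ)
    (hD : ∀ i, Ddiag i ∈ Set.Ioc (0 : ℝ) 1)
    (k : Fin N) (hk : ∀ i : Fin N, i ≠ k → Ddiag i < Ddiag k)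
    (A : Matrix (Fin N) (Fin N) ℝ) (hA : IsDiagSymmetrizable A)
    (hstab : sSup (spectrum ℝ A) < 0) :
    let f : ℝ → ℝ := fun τ => specRad (Matrix.diagonal Ddiag * mexp (τ • A))
    StrictAntiOn f (Set.Ici 0) ∧ Filter.Tendsto f Filter.atTop (nhds 0) := by
  intro f
  obtain ⟨d, hd0, hBsym0⟩ := hA
  haveI : Nonempty (Fin N) := ⟨k⟩
  set φ : ℝ →+* ℂ := algebraMap ℝ ℂ with hφ
  set lam : ℝ := sSup (spectrum ℝ A) with hlam
  set Dg : Matrix (Fin N) (Fin N) ℝ := diagonal Ddiag with hDg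
  set T : Matrix (Fin N) (Fin N) ℝ := diagonal d with hT
  set s : Fin N → ℝ := fun i => Real.sqrt (Ddiag i) with hs
  have hs0 : ∀ i, s i ≠ 0 := fun i => (Real.sqrt_pos.2 (hD i).1).ne'
  have hss : ∀ i, s i * s i = Ddiag i := fun i => Real.mul_self_sqrt (hD i).1.le
  set Sm : Matrix (Fin N) (Fin N) ℝ := diagonal s with hSm
  set Tinv : Matrix (Fin N) (Fin N) ℝ := diagonal (fun i => (d i)⁻¹) with hTinvdef
  have hTTinv : T * Tinv = 1 := by
    have h : (fun i => d i * (d i)⁻¹) = fun _ => (1:ℝ) := funext fun i => mul_inv_cancel₀ (hd0 i)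
    rw [hT, hTinvdef, diagonal_mul_diagonal, h, diagonal_one]
  have hTinvT : Tinv * T = 1 := by
    have h : (fun i => (d i)⁻¹ * d i) = fun _ => (1:ℝ) := funext fun i => inv_mul_cancel₀ (hd0 i)
    rw [hTinvdef, hT, diagonal_mul_diagonal, h, diagonal_one]
  set uT : (Matrix (Fin N) (Fin N) ℝ)ˣ := ⟨T, Tinv, hTTinv, hTinvT⟩ with huT
  have hTinv_eq : T⁻¹ = Tinv := Matrix.inv_eq_right_inv hTTinv
  set B : Matrix (Fin N) (Fin N) ℝ := Tinv * A * T with hBdef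
  have hBsym : B.IsSymm := by rw [hBdef, ← hTinv_eq]; exact hBsym0
  have hAeq : A = T * B * Tinv := by
    rw [hBdef]
    calc A = (T * Tinv) * A * (T * Tinv) := by rw [hTTinv, one_mul, mul_one]
    _ = T * (Tinv * A * T) * Tinv := by noncomm_ring
  -- eigen decomposition of B
  have hBherm : B.IsHermitian := by
    rw [Matrix.IsHermitian, Matrix.conjTranspose_eq_transpose_of_trivial]; exact hBsym
  set U : Matrix (Fin N) (Fin N) ℝ := (hBherm.eigenvectorUnitary : Matrix (Fin N) (Fin N) ℝ)
    with hU
  set μ : Fin N → ℝ := hBherm.eigenvalues with hμ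
  have hUUs : U * star U = 1 := Matrix.mem_unitaryGroup_iff.mp (hBherm.eigenvectorUnitary).2
  have hUsU : star U * U = 1 := Matrix.mem_unitaryGroup_iff'.mp (hBherm.eigenvectorUnitary).2
  set uU : (Matrix (Fin N) (Fin N) ℝ)ˣ := ⟨U, star U, hUUs, hUsU⟩ with huU
  set uUc : (Matrix (Fin N) (Fin N) ℂ)ˣ :=
    ⟨U.map φ, (star U).map φ,
      by rw [← Matrix.map_mul, hUUs, Matrix.map_one _ (map_zero φ) (map_one φ)],
      by rw [← Matrix.map_mul, hUsU, Matrix.map_one _ (map_zero φ) (map_one φ)]⟩ with huUc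
  have hBspec : B = U * diagonal μ * star U := by
    simpa [hU, hμ] using hBherm.spectral_theorem
  have hspecA : spectrum ℝ A = Set.range μ := by
    rw [hAeq,
      show spectrum ℝ (T * B * Tinv) = spectrum ℝ B from spectrum.units_conjugate (u := uT),
      hBspec,
      show spectrum ℝ (U * diagonal μ * star U) = spectrum ℝ (diagonal μ) from
        spectrum.units_conjugate (u := uU)]
    exact spectrum_diagonal μ
  have hmu_le : ∀ i, μ i ≤ lam := by
    intro i
    rw [hlam, hspecA]
    exact le_csSup (Set.finite_range μ).bddAbove ⟨i, rfl⟩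
  -- exponential formula
  have hexp : ∀ c : ℝ, mexp (c • B) = U * diagonal (fun i => Real.exp (c * μ i)) * star U := by
    intro c
    have h2 : U * (c • diagonal μ) * star U = c • (U * diagonal μ * star U) := by
      rw [Matrix.mul_smul, Matrix.smul_mul]
    have hd4 : diagonal (fun i => c * μ i) = c • diagonal μ := by
      have h : (fun i => c * μ i) = c • μ := funext fun i => by simp
      rw [h, Matrix.diagonal_smul]
    have h1 : c • B = U * diagonal (fun i => c * μ i) * star U := by
      rw [hBspec, ← h2, hd4]
    have h3 : NormedSpace.exp (U * diagonal (fun i => c * μ i) * star U)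
        = U * NormedSpace.exp (diagonal (fun i => c * μ i)) * star U :=
      Matrix.exp_units_conj uU _
    have h4 : NormedSpace.exp (fun i => c * μ i) = fun i => Real.exp (c * μ i) :=
      funext fun i => by rw [Pi.coe_exp]; exact (congrFun Real.exp_eq_exp_ℝ _).symm
    rw [show mexp (c • B) = NormedSpace.exp (c • B) from rfl, h1, h3, Matrix.exp_diagonal, h4]
  -- norm bound for the exponential
  have hnormexp : ∀ c : ℝ, 0 ≤ c → ‖(mexp (c • B)).map φ‖ ≤ Real.exp (c * lam) := by
    intro c hc
    have hsymc : (c • B).IsSymm := by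
      show (c • B)ᵀ = c • B
      rw [Matrix.transpose_smul, hBsym]
    have hsa : IsSelfAdjoint ((mexp (c • B)).map φ) :=
      isSelfAdjoint_map_of_isSymm (Matrix.IsSymm.exp hsymc)
    have hspec2 : spectrum ℂ ((mexp (c • B)).map φ)
        = Set.range (fun i => (φ (Real.exp (c * μ i)) : ℂ)) := by
      rw [hexp c, Matrix.map_mul, Matrix.map_mul,
        show spectrum ℂ
            (U.map φ * (diagonal fun i => Real.exp (c * μ i)).map φ * (star U).map φ)
          = spectrum ℂ ((diagonal fun i => Real.exp (c * μ i)).map φ) from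
          spectrum.units_conjugate (u := uUc),
        Matrix.diagonal_map (map_zero φ)]
      exact spectrum_diagonal _
    calc ‖(mexp (c • B)).map φ‖
        = sSup ((fun z : ℂ => ‖z‖) '' spectrum ℂ ((mexp (c • B)).map φ)) :=
          (sSup_abs_spectrum _ hsa).symm
    _ ≤ Real.exp (c * lam) := by
        rw [hspec2, ← Set.range_comp]
        refine Real.sSup_le ?_ (Real.exp_nonneg _)
        rintro x ⟨i, rfl⟩
        simp only [Function.comp]
        rw [show φ (Real.exp (c * μ i)) = ((Real.exp (c * μ i) : ℝ) : ℂ) from rfl,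
          Complex.norm_real, Real.norm_eq_abs, abs_of_nonneg (Real.exp_nonneg _)]
        exact Real.exp_le_exp.2 (mul_le_mul_of_nonneg_left (hmu_le i) hc)
  -- the square root factorization
  set X : ℝ → Matrix (Fin N) (Fin N) ℝ := fun τ => mexp ((τ/2) • B) * Sm with hX
  have hesym : ∀ c : ℝ, (mexp (c • B)).IsSymm := by
    intro c
    refine Matrix.IsSymm.exp ?_
    show (c • B)ᵀ = c • B
    rw [Matrix.transpose_smul, hBsym]
  have hsplit : ∀ a b : ℝ, mexp ((a + b) • B) = mexp (a • B) * mexp (b • B) := by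
    intro a b
    rw [show mexp ((a + b) • B) = NormedSpace.exp ((a + b) • B) from rfl, add_smul]
    exact Matrix.exp_add_of_commute _ _ (((Commute.refl B).smul_left a).smul_right b)
  have hXtX : ∀ τ : ℝ, (X τ)ᵀ * X τ = Sm * mexp (τ • B) * Sm := by
    intro τ
    have h1 : (X τ)ᵀ = Sm * mexp ((τ/2) • B) := by
      show (mexp ((τ/2) • B) * Sm)ᵀ = _
      rw [Matrix.transpose_mul, hSm, Matrix.diagonal_transpose, hesym (τ/2)]
    have h2 : mexp (τ • B) = mexp ((τ/2) • B) * mexp ((τ/2) • B) := by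
      rw [← hsplit]; norm_num
    show (X τ)ᵀ * (mexp ((τ/2) • B) * Sm) = _
    rw [h1, h2]
    noncomm_ring
  set P : Matrix (Fin N) (Fin N) ℝ := diagonal (fun i => d i * s i) with hP
  set Pinv : Matrix (Fin N) (Fin N) ℝ := diagonal (fun i => (d i * s i)⁻¹) with hPinvdef
  have hPne : ∀ i, d i * s i ≠ 0 := fun i => mul_ne_zero (hd0 i) (hs0 i)
  have hPP : P * Pinv = 1 := by
    have h : (fun i => (d i * s i) * (d i * s i)⁻¹) = fun _ => (1:ℝ) :=
      funext fun i => mul_inv_cancel₀ (hPne i)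
    rw [hP, hPinvdef, diagonal_mul_diagonal, h, diagonal_one]
  have hPinvP : Pinv * P = 1 := by
    have h : (fun i => (d i * s i)⁻¹ * (d i * s i)) = fun _ => (1:ℝ) :=
      funext fun i => inv_mul_cancel₀ (hPne i)
    rw [hPinvdef, hP, diagonal_mul_diagonal, h, diagonal_one]
  set uP : (Matrix (Fin N) (Fin N) ℂ)ˣ :=
    ⟨P.map φ, Pinv.map φ,
      by rw [← Matrix.map_mul, hPP, Matrix.map_one _ (map_zero φ) (map_one φ)],
      by rw [← Matrix.map_mul, hPinvP, Matrix.map_one _ (map_zero φ) (map_one φ)]⟩ with huP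
  have hkey : ∀ τ : ℝ, Dg * mexp (τ • A) = P * (Sm * mexp (τ • B) * Sm) * Pinv := by
    intro τ
    have h0 : T * (τ • B) * Tinv = τ • (T * B * Tinv) := by
      rw [Matrix.mul_smul, Matrix.smul_mul]
    have hexpA : mexp (τ • A) = T * mexp (τ • B) * Tinv := by
      rw [show mexp (τ • A) = NormedSpace.exp (τ • A) from rfl, hAeq, ← h0]
      exact Matrix.exp_units_conj uT _
    have h1 : Dg * T = P * Sm := by
      have h : (fun i => Ddiag i * d i) = fun i => (d i * s i) * s i := by
        funext i; rw [mul_assoc, hss i, mul_comm]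
      rw [hDg, hT, hP, hSm, diagonal_mul_diagonal, diagonal_mul_diagonal, h]
    have h2 : Sm * Pinv = Tinv := by
      have h : (fun i => s i * (d i * s i)⁻¹) = fun i => (d i)⁻¹ := by
        funext i
        rw [mul_inv, ← mul_assoc, mul_comm (s i) ((d i)⁻¹), mul_assoc,
          mul_inv_cancel₀ (hs0 i), mul_one]
      rw [hSm, hPinvdef, hTinvdef, diagonal_mul_diagonal, h]
    rw [hexpA]
    calc Dg * (T * mexp (τ • B) * Tinv) = (Dg * T) * (mexp (τ • B) * Tinv) := by noncomm_ring
    _ = (P * Sm) * (mexp (τ • B) * (Sm * Pinv)) := by rw [h1, h2]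
    _ = P * (Sm * mexp (τ • B) * Sm) * Pinv := by noncomm_ring
  -- the norm formula for f
  have hf : ∀ τ : ℝ, f τ = ‖(X τ).map φ‖ * ‖(X τ).map φ‖ := by
    intro τ
    have hsa : IsSelfAdjoint ((Sm * mexp (τ • B) * Sm).map φ) := by
      apply isSelfAdjoint_map_of_isSymm
      show (Sm * mexp (τ • B) * Sm)ᵀ = _
      rw [← hXtX τ, Matrix.transpose_mul, Matrix.transpose_transpose]
    have hmap : (Sm * mexp (τ • B) * Sm).map φ = ((X τ).map φ)ᴴ * ((X τ).map φ) := by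
      rw [← hXtX τ, Matrix.map_mul, map_conjTranspose_real]
    calc f τ = sSup ((fun z : ℂ => ‖z‖) '' spectrum ℂ ((Dg * mexp (τ • A)).map φ)) := rfl
    _ = sSup ((fun z : ℂ => ‖z‖) '' spectrum ℂ ((Sm * mexp (τ • B) * Sm).map φ)) := by
        rw [hkey τ, Matrix.map_mul, Matrix.map_mul,
          show spectrum ℂ (P.map φ * ((Sm * mexp (τ • B) * Sm).map φ) * Pinv.map φ)
            = spectrum ℂ ((Sm * mexp (τ • B) * Sm).map φ) from
            spectrum.units_conjugate (u := uP)]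
    _ = ‖(Sm * mexp (τ • B) * Sm).map φ‖ := sSup_abs_spectrum _ hsa
    _ = ‖((X τ).map φ)ᴴ * ((X τ).map φ)‖ := by rw [hmap]
    _ = ‖(X τ).map φ‖ * ‖(X τ).map φ‖ := Matrix.l2_opNorm_conjTranspose_mul_self _
  -- positivity
  have hXunit : ∀ τ : ℝ, IsUnit ((X τ).map φ) := by
    intro τ
    have h1 : IsUnit (X τ) := (Matrix.isUnit_exp _).mul (isUnit_diagonal hs0)
    exact h1.map (RingHom.mapMatrix φ)
  have hpos : ∀ τ : ℝ, 0 < ‖(X τ).map φ‖ := fun τ => norm_pos_iff.2 (hXunit τ).ne_zero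
  constructor
  · intro a ha b hb hab
    rw [Set.mem_Ici] at ha hb
    rw [hf a, hf b]
    have hdecomp : (X b).map φ = (mexp (((b - a)/2) • B)).map φ * (X a).map φ := by
      rw [← Matrix.map_mul]
      refine congrArg (fun M : Matrix (Fin N) (Fin N) ℝ => M.map φ) ?_
      have h := hsplit ((b - a)/2) (a/2)
      rw [show (b - a)/2 + a/2 = b/2 by ring] at h
      show mexp ((b/2) • B) * Sm = mexp (((b - a)/2) • B) * (mexp ((a/2) • B) * Sm)
      rw [h, Matrix.mul_assoc]
    have h1 : ‖(X b).map φ‖ < ‖(X a).map φ‖ := by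
      calc ‖(X b).map φ‖ = ‖(mexp (((b - a)/2) • B)).map φ * (X a).map φ‖ := by rw [hdecomp]
      _ ≤ ‖(mexp (((b - a)/2) • B)).map φ‖ * ‖(X a).map φ‖ := norm_mul_le _ _
      _ ≤ Real.exp (((b - a)/2) * lam) * ‖(X a).map φ‖ :=
          mul_le_mul_of_nonneg_right (hnormexp _ (by linarith)) (norm_nonneg _)
      _ < 1 * ‖(X a).map φ‖ := by
          refine mul_lt_mul_of_pos_right ?_ (hpos a)
          exact Real.exp_lt_one_iff.2 (mul_neg_of_pos_of_neg (by linarith) hstab)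
      _ = ‖(X a).map φ‖ := one_mul _
    exact mul_self_lt_mul_self (norm_nonneg _) h1
  · have hC : Filter.Tendsto (fun τ : ℝ => Real.exp (τ * lam) * (‖Sm.map φ‖ * ‖Sm.map φ‖))
        Filter.atTop (nhds 0) := by
      have h1 : Filter.Tendsto (fun τ : ℝ => τ * lam) Filter.atTop Filter.atBot :=
        Filter.Tendsto.atTop_mul_const_of_neg hstab Filter.tendsto_id
      have h2 := (Real.tendsto_exp_atBot.comp h1).mul_const (‖Sm.map φ‖ * ‖Sm.map φ‖)
      simpa using h2
    refine squeeze_zero' (Filter.Eventually.of_forall fun τ => ?_) ?_ hC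
    · rw [hf τ]; positivity
    · filter_upwards [Filter.eventually_ge_atTop 0] with τ hτ
      rw [hf τ]
      have h1 : ‖(X τ).map φ‖ ≤ Real.exp ((τ/2) * lam) * ‖Sm.map φ‖ := by
        calc ‖(X τ).map φ‖ = ‖(mexp ((τ/2) • B)).map φ * Sm.map φ‖ := by
              rw [show (X τ).map φ = ((mexp ((τ/2) • B)) * Sm).map φ from rfl, Matrix.map_mul]
        _ ≤ ‖(mexp ((τ/2) • B)).map φ‖ * ‖Sm.map φ‖ := norm_mul_le _ _
        _ ≤ Real.exp ((τ/2) * lam) * ‖Sm.map φ‖ :=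
            mul_le_mul_of_nonneg_right (hnormexp _ (by linarith)) (norm_nonneg _)
      have h3 : Real.exp ((τ/2) * lam) * Real.exp ((τ/2) * lam) = Real.exp (τ * lam) := by
        rw [← Real.exp_add]; congr 1; ring
      calc ‖(X τ).map φ‖ * ‖(X τ).map φ‖
          ≤ (Real.exp ((τ/2) * lam) * ‖Sm.map φ‖) * (Real.exp ((τ/2) * lam) * ‖Sm.map φ‖) :=
            mul_le_mul h1 h1 (norm_nonneg _) (by positivity)
      _ = Real.exp (τ * lam) * (‖Sm.map φ‖ * ‖Sm.map φ‖) := by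
            rw [mul_mul_mul_comm, h3]
end
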